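/- arXiv:1612.05458 — 2 statements merged into one kernel-verified Lean document; each statement's English description precedes it below -/
import Mathlib

section
/- Let q : ℤ → ℝ be nonnegative and finitely supported, let h be the one-dimensional Schrödinger operator on ℓ²(ℤ) associated with q, and let H be the guided Schrödinger operator on ℓ²(ℤ²) associated with q. If μ ∈ ℝ is an eigenvalue of h (i.e., h f = μ f for some nonzero f ∈ ℓ²(ℤ)), then the whole guided band [μ, μ + 4] is contained in the real spectrum of H, i.e., for every x ∈ [μ, μ+4] one has (x : ℂ) ∈ spectrum ℂ H. -/
/-!
A Weyl sequence argument. Write `x = μ + 2 - 2 cos θ` and let `w_N` be the plane wave `e^{iθn}`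
cut off to `|n| ≤ N`. For the eigenvector `f` of `h` the guided operator separates variables:
`(x - H)(w_N ⊗ f) = d_N ⊗ f`, where `d_N = w_N(· + 1) + w_N(· - 1) - 2 cos θ w_N` vanishes away from
the four points `±N, ±(N + 1)`, so `‖d_N‖ ≤ 8`, whereas `‖w_N‖ = √(2N + 1)`. Hence `x - H` is not
bounded below and cannot be invertible.
-/

open Complex

theorem spectrum.mem_of_forall_exists_norm_lt {𝕜 E : Type*} [NontriviallyNormedField 𝕜]
    [NormedAddCommGroup E] [NormedSpace 𝕜 E] (T : E →L[𝕜] E) (a : 𝕜)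
    (h : ∀ C : ℝ, 0 ≤ C → ∃ v : E, C * ‖(algebraMap 𝕜 (E →L[𝕜] E) a - T) v‖ < ‖v‖) :
    a ∈ spectrum 𝕜 T := by
  by_contra ha
  obtain ⟨u, hu⟩ := spectrum.notMem_iff.mp ha
  obtain ⟨v, hv⟩ := h ‖(↑u⁻¹ : E →L[𝕜] E)‖ (norm_nonneg _)
  have hinv : (↑u⁻¹ : E →L[𝕜] E) ((algebraMap 𝕜 (E →L[𝕜] E) a - T) v) = v := by
    rw [← hu, ← mul_apply_eq_comp, Units.inv_mul, one_apply_eq_self]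
  have hle := (↑u⁻¹ : E →L[𝕜] E).le_opNorm ((algebraMap 𝕜 (E →L[𝕜] E) a - T) v)
  rw [hinv] at hle
  exact hv.not_ge hle

namespace lp

variable {α β 𝕜 : Type*} [NormedDivisionRing 𝕜]

theorem hasSum_norm_rpow_two (c : lp (fun _ : α => 𝕜) 2) :
    HasSum (fun a => ‖c a‖ ^ (2 : ℝ)) (‖c‖ ^ (2 : ℝ)) := by
  simpa only [ENNReal.toReal_ofNat] using lp.hasSum_norm (by simp) c

theorem hasSum_norm_rpow_two_mul (c : lp (fun _ : α => 𝕜) 2) (f : lp (fun _ : β => 𝕜) 2) :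
    HasSum (fun m : α × β => ‖c m.1 * f m.2‖ ^ (2 : ℝ)) ((‖c‖ * ‖f‖) ^ (2 : ℝ)) := by
  have hc := hasSum_norm_rpow_two c
  have hf := hasSum_norm_rpow_two f
  have hs : Summable fun m : α × β => ‖c m.1‖ ^ (2 : ℝ) * ‖f m.2‖ ^ (2 : ℝ) :=
    hc.summable.mul_of_nonneg hf.summable (fun _ => by positivity) (fun _ => by positivity)
  simp only [norm_mul, Real.mul_rpow (norm_nonneg _) (norm_nonneg _)]
  rw [hs.hasSum_iff, hs.tsum_prod' fun a => hf.summable.mul_left (‖c a‖ ^ (2 : ℝ))]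
  simp only [tsum_mul_left, hf.tsum_eq, tsum_mul_right, hc.tsum_eq]

noncomputable def tmul (c : lp (fun _ : α => 𝕜) 2) (f : lp (fun _ : β => 𝕜) 2) :
    lp (fun _ : α × β => 𝕜) 2 :=
  ⟨fun m => c m.1 * f m.2, memℓp_gen <| by
    simpa only [ENNReal.toReal_ofNat] using (hasSum_norm_rpow_two_mul c f).summable⟩

@[simp]
theorem tmul_apply (c : lp (fun _ : α => 𝕜) 2) (f : lp (fun _ : β => 𝕜) 2) (m : α × β) :
    tmul c f m = c m.1 * f m.2 := rfl

theorem norm_tmul (c : lp (fun _ : α => 𝕜) 2) (f : lp (fun _ : β => 𝕜) 2) :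
    ‖tmul c f‖ = ‖c‖ * ‖f‖ :=
  Real.rpow_left_injOn two_ne_zero (norm_nonneg _) (mul_nonneg (norm_nonneg _) (norm_nonneg _))
    ((hasSum_norm_rpow_two (tmul c f)).unique (hasSum_norm_rpow_two_mul c f))

variable [DecidableEq α] {E : α → Type*} [∀ i, NormedAddCommGroup (E i)]

theorem sum_single_apply {p : ENNReal} (s : Finset α) (g : ∀ i, E i) (j : α) :
    (∑ i ∈ s, lp.single p i (g i)) j = if j ∈ s then g j else 0 := by
  simp only [lp.coeFn_sum, Finset.sum_apply, lp.coeFn_single, Finset.sum_pi_single]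

theorem norm_sq_sum_single (s : Finset α) (g : ∀ i, E i) :
    ‖∑ i ∈ s, lp.single 2 i (g i)‖ ^ 2 = ∑ i ∈ s, ‖g i‖ ^ 2 := by
  simpa only [ENNReal.toReal_ofNat, Real.rpow_two] using lp.norm_sum_single (p := 2) (by simp) g s

end lp

section PlaneWave

variable (θ : ℝ) (N : ℕ)

noncomputable def truncatedPlaneWave : lp (fun _ : ℤ => ℂ) 2 :=
  ∑ n ∈ Finset.Icc (-N : ℤ) N, lp.single 2 n (exp ((θ * n : ℝ) * I))

theorem truncatedPlaneWave_apply (n : ℤ) :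
    truncatedPlaneWave θ N n = if n ∈ Finset.Icc (-N : ℤ) N then exp ((θ * n : ℝ) * I) else 0 :=
  lp.sum_single_apply _ _ n

theorem norm_truncatedPlaneWave_apply_le (n : ℤ) : ‖truncatedPlaneWave θ N n‖ ≤ 1 := by
  rw [truncatedPlaneWave_apply]
  split_ifs
  · exact (norm_exp_ofReal_mul_I _).le
  · simp

theorem norm_truncatedPlaneWave : ‖truncatedPlaneWave θ N‖ = √(2 * N + 1) := by
  rw [← Real.sqrt_sq (norm_nonneg _), truncatedPlaneWave, lp.norm_sq_sum_single]
  simp only [norm_exp_ofReal_mul_I, one_pow, Finset.sum_const, Int.card_Icc, nsmul_eq_mul, mul_one]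
  congr 1
  rw [show (N + 1 - -N : ℤ).toNat = 2 * N + 1 by omega]
  push_cast
  ring

theorem exp_add_exp_eq_two_cos_mul (n : ℤ) :
    exp ((θ * (n + 1 : ℤ) : ℝ) * I) + exp ((θ * (n - 1 : ℤ) : ℝ) * I)
      = 2 * Real.cos θ * exp ((θ * n : ℝ) * I) := by
  rw [ofReal_cos, two_cos, add_mul, ← exp_add, ← exp_add]
  congr 2 <;> push_cast <;> ring

noncomputable def truncatedPlaneWaveDefect (n : ℤ) : ℂ :=
  truncatedPlaneWave θ N (n + 1) + truncatedPlaneWave θ N (n - 1)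
    - 2 * Real.cos θ * truncatedPlaneWave θ N n

theorem truncatedPlaneWaveDefect_eq_zero (n : ℤ)
    (hn : n ∉ ({-(N : ℤ) - 1, -(N : ℤ), (N : ℤ), (N : ℤ) + 1} : Finset ℤ)) :
    truncatedPlaneWaveDefect θ N n = 0 := by
  simp only [Finset.mem_insert, Finset.mem_singleton, not_or] at hn
  simp only [truncatedPlaneWaveDefect, truncatedPlaneWave_apply, Finset.mem_Icc]
  by_cases hin : -(N : ℤ) ≤ n ∧ n ≤ N
  · rw [if_pos (by omega), if_pos (by omega), if_pos hin, exp_add_exp_eq_two_cos_mul, sub_self]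
  · rw [if_neg (by omega), if_neg (by omega), if_neg hin]
    ring

theorem norm_truncatedPlaneWaveDefect_le (n : ℤ) : ‖truncatedPlaneWaveDefect θ N n‖ ≤ 4 := by
  have h2cos : ‖(2 * Real.cos θ : ℂ)‖ ≤ 2 := by
    rw [← ofReal_ofNat, ← ofReal_mul, norm_real, Real.norm_eq_abs, abs_mul, abs_two]
    linarith [Real.abs_cos_le_one θ]
  calc ‖truncatedPlaneWaveDefect θ N n‖
      ≤ ‖truncatedPlaneWave θ N (n + 1)‖ + ‖truncatedPlaneWave θ N (n - 1)‖
        + ‖(2 * Real.cos θ : ℂ)‖ * ‖truncatedPlaneWave θ N n‖ := by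
        rw [← norm_mul]
        exact norm_sub_le_of_le (norm_add_le _ _) le_rfl
    _ ≤ 1 + 1 + 2 * 1 := by
        gcongr
        exacts [norm_truncatedPlaneWave_apply_le .., norm_truncatedPlaneWave_apply_le ..,
          norm_truncatedPlaneWave_apply_le ..]
    _ = 4 := by norm_num

theorem exists_lp_truncatedPlaneWaveDefect :
    ∃ d : lp (fun _ : ℤ => ℂ) 2, ⇑d = truncatedPlaneWaveDefect θ N ∧ ‖d‖ ≤ 8 := by
  set S : Finset ℤ := {-(N : ℤ) - 1, -(N : ℤ), (N : ℤ), (N : ℤ) + 1}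
  refine ⟨∑ n ∈ S, lp.single 2 n (truncatedPlaneWaveDefect θ N n), ?_, ?_⟩
  · ext n
    rw [lp.sum_single_apply, ite_eq_left_iff]
    exact fun hn => (truncatedPlaneWaveDefect_eq_zero θ N n hn).symm
  · refine (pow_le_pow_iff_left₀ (norm_nonneg _) (by norm_num) two_ne_zero).mp ?_
    calc ‖∑ n ∈ S, lp.single 2 n (truncatedPlaneWaveDefect θ N n)‖ ^ 2
        = ∑ n ∈ S, ‖truncatedPlaneWaveDefect θ N n‖ ^ 2 := lp.norm_sq_sum_single _ _
      _ ≤ S.card * 4 ^ 2 := by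
        simpa using Finset.sum_le_card_nsmul S _ _ fun n _ =>
          pow_le_pow_left₀ (norm_nonneg _) (norm_truncatedPlaneWaveDefect_le θ N n) 2
      _ ≤ 4 * 4 ^ 2 := by gcongr; exact_mod_cast Finset.card_le_four
      _ = 8 ^ 2 := by norm_num

end PlaneWave

theorem algebraMap_sub_guided_apply_tmul (q : ℤ → ℝ)
    (H : lp (fun _ : ℤ × ℤ => ℂ) 2 →L[ℂ] lp (fun _ : ℤ × ℤ => ℂ) 2)
    (hH : ∀ (f : lp (fun _ : ℤ × ℤ => ℂ) 2) (m₁ m₂ : ℤ),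
      H f (m₁, m₂) = 4 * f (m₁, m₂) - f (m₁ + 1, m₂) - f (m₁ - 1, m₂)
        - f (m₁, m₂ + 1) - f (m₁, m₂ - 1) - (q m₂ : ℂ) * f (m₁, m₂))
    (μ : ℂ) (f : lp (fun _ : ℤ => ℂ) 2)
    (hf : ∀ n, f (n + 1) + f (n - 1) + q n * f n = (2 - μ) * f n)
    (x : ℂ) (c : lp (fun _ : ℤ => ℂ) 2) (m₁ m₂ : ℤ) :
    (algebraMap ℂ _ x - H) (lp.tmul c f) (m₁, m₂)
      = (c (m₁ + 1) + c (m₁ - 1) - (μ + 2 - x) * c m₁) * f m₂ := by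
  simp only [Algebra.algebraMap_eq_smul_one, sub_apply, smul_apply, one_apply_eq_self,
    lp.coeFn_sub, lp.coeFn_smul, Pi.sub_apply, Pi.smul_apply, smul_eq_mul, hH, lp.tmul_apply]
  linear_combination c m₁ * hf m₂

theorem guided_band_in_spectrum_general
    (q : ℤ → ℝ)
    (h : lp (fun _ : ℤ => ℂ) 2 →L[ℂ] lp (fun _ : ℤ => ℂ) 2)
    (hh : ∀ (f : lp (fun _ : ℤ => ℂ) 2) (n : ℤ),
      h f n = 2 * f n - f (n + 1) - f (n - 1) - (q n : ℂ) * f n)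
    (H : lp (fun _ : ℤ × ℤ => ℂ) 2 →L[ℂ] lp (fun _ : ℤ × ℤ => ℂ) 2)
    (hH : ∀ (f : lp (fun _ : ℤ × ℤ => ℂ) 2) (m₁ m₂ : ℤ),
      H f (m₁, m₂) = 4 * f (m₁, m₂) - f (m₁ + 1, m₂) - f (m₁ - 1, m₂)
        - f (m₁, m₂ + 1) - f (m₁, m₂ - 1) - (q m₂ : ℂ) * f (m₁, m₂))
    (μ : ℝ) (f : lp (fun _ : ℤ => ℂ) 2) (hf : f ≠ 0) (hμ : h f = (μ : ℂ) • f) :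
    ∀ x ∈ Set.Icc μ (μ + 4), (x : ℂ) ∈ spectrum ℂ H := by
  rintro x ⟨hμx, hxμ⟩
  have heig : ∀ n, f (n + 1) + f (n - 1) + q n * f n = (2 - μ) * f n := fun n => by
    have := congr($hμ n)
    rw [hh, lp.coeFn_smul, Pi.smul_apply, smul_eq_mul] at this
    linear_combination -this
  obtain ⟨θ, hθ⟩ : ∃ θ : ℝ, 2 * Real.cos θ = μ + 2 - x :=
    ⟨Real.arccos ((μ + 2 - x) / 2), by rw [Real.cos_arccos (by linarith) (by linarith)]; ring⟩
  refine spectrum.mem_of_forall_exists_norm_lt H x fun C hC => ?_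
  obtain ⟨N, hN⟩ := exists_nat_gt ((8 * C) ^ 2)
  obtain ⟨d, hd, hd8⟩ := exists_lp_truncatedPlaneWaveDefect θ N
  refine ⟨lp.tmul (truncatedPlaneWave θ N) f, ?_⟩
  have himage : (algebraMap ℂ _ (x : ℂ) - H) (lp.tmul (truncatedPlaneWave θ N) f)
      = lp.tmul d f := by
    ext ⟨m₁, m₂⟩
    have hθ' : (μ + 2 - x : ℂ) = 2 * Real.cos θ := by exact_mod_cast hθ.symm
    rw [algebraMap_sub_guided_apply_tmul q H hH μ f heig, hθ', lp.tmul_apply, hd]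
    rfl
  rw [himage, lp.norm_tmul, lp.norm_tmul, norm_truncatedPlaneWave]
  have hf0 : 0 < ‖f‖ := norm_pos_iff.mpr hf
  have h8C : 8 * C < √(2 * N + 1) := (Real.lt_sqrt (by positivity)).mpr (by linarith)
  calc C * (‖d‖ * ‖f‖) ≤ C * (8 * ‖f‖) := by gcongr
    _ < √(2 * N + 1) * ‖f‖ := by nlinarith

/-- If `μ` is an eigenvalue of the one-dimensional fiber operator `h`, then the whole
guided band `[μ, μ+4]` lies in the real spectrum of the guided operator `H` on `ℤ²`. -/
theorem guided_band_in_spectrum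
    (q : ℤ → ℝ) (hq : ∀ n, 0 ≤ q n) (hqfin : (Function.support q).Finite)
    (h : lp (fun _ : ℤ => ℂ) 2 →L[ℂ] lp (fun _ : ℤ => ℂ) 2)
    (hh : ∀ (f : lp (fun _ : ℤ => ℂ) 2) (n : ℤ),
      h f n = 2 * f n - f (n + 1) - f (n - 1) - (q n : ℂ) * f n)
    (H : lp (fun _ : ℤ × ℤ => ℂ) 2 →L[ℂ] lp (fun _ : ℤ × ℤ => ℂ) 2)
    (hH : ∀ (f : lp (fun _ : ℤ × ℤ => ℂ) 2) (m₁ m₂ : ℤ),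
      H f (m₁, m₂) = 4 * f (m₁, m₂) - f (m₁ + 1, m₂) - f (m₁ - 1, m₂)
        - f (m₁, m₂ + 1) - f (m₁, m₂ - 1) - (q m₂ : ℂ) * f (m₁, m₂))
    (μ : ℝ) (f : lp (fun _ : ℤ => ℂ) 2) (hf : f ≠ 0) (hμ : h f = (μ : ℂ) • f) :
    ∀ x ∈ Set.Icc μ (μ + 4), (x : ℂ) ∈ spectrum ℂ H :=
  guided_band_in_spectrum_general q h hh H hH μ f hf hμ
end

section
/- For t > 0 let H_t be the guided Schrödinger operator on ℓ²(ℤ²) with single-strip potential of depth t, i.e., the bounded linear operator satisfying (H_t f)(m) = 4 f(m₁,m₂) − f(m₁+1,m₂) − f(m₁−1,m₂) − f(m₁,m₂+1) − f(m₁,m₂−1) − t·(if m₂ = 0 then f(m₁,m₂) else 0) for all m = (m₁,m₂) ∈ ℤ². Then the entire guided band [2 − √(4 + t²), 6 − √(4 + t²)] is contained in the real spectrum of H_t: for every x ∈ [2 − √(4+t²), 6 − √(4+t²)] one has (x : ℂ) ∈ spectrum ℂ H_t. -/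
/-!
The bound state `r ^ |n|`, with `r = (√(4 + t²) - t) / 2` the root in `(0, 1)` of
`r² + t r = 1`, is an exact `ℓ²` eigenvector of `Δ₁ - t δ₀` with eigenvalue
`μ = 2 - 2r - t = 2 - √(4 + t²)`. For `ν ∈ [0, 4]` pick `|z| = 1` with `2 - (z + z⁻¹) = ν`;
the plane wave `z ^ n` cut off to `|n| ≤ N` has norm `√(2N + 1)`, while its residual under
`ν - Δ₁` lives on the four points `±N, ±(N + 1)` and stays bounded. Tensoring the two gives
vectors `f` with `‖(μ + ν - H_t) f‖ / ‖f‖ → 0`, which rules out a bounded inverse of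
`μ + ν - H_t`.
-/

theorem mem_spectrum_of_forall_exists_norm_lt {𝕜 E : Type*} [NontriviallyNormedField 𝕜]
    [NormedAddCommGroup E] [NormedSpace 𝕜 E] (T : E →L[𝕜] E) (x : 𝕜)
    (h : ∀ ε > 0, ∃ f : E, ‖(algebraMap 𝕜 (E →L[𝕜] E) x - T) f‖ < ε * ‖f‖) :
    x ∈ spectrum 𝕜 T := by
  rintro ⟨u, hu⟩
  set c := ‖(↑u⁻¹ : E →L[𝕜] E)‖
  obtain ⟨f, hf⟩ := h (c + 1)⁻¹ (by positivity)
  have hf_le : ‖f‖ ≤ c * ‖(algebraMap 𝕜 (E →L[𝕜] E) x - T) f‖ := by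
    calc ‖f‖ = ‖(↑u⁻¹ : E →L[𝕜] E) ((u : E →L[𝕜] E) f)‖ := by
          rw [← mul_apply_eq_comp, Units.inv_mul, one_apply_eq_self]
      _ ≤ c * ‖(u : E →L[𝕜] E) f‖ := ContinuousLinearMap.le_opNorm _ _
      _ = _ := by rw [hu]
  have hf_pos : 0 < ‖f‖ := pos_of_mul_pos_right ((norm_nonneg _).trans_lt hf) (by positivity)
  have hc : c * (c + 1)⁻¹ < 1 := by
    rw [mul_inv_lt_iff₀ (by positivity)]; linarith
  nlinarith [mul_le_mul_of_nonneg_left hf.le (norm_nonneg _ : 0 ≤ c)]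

theorem memℓp_two_of_summable_sq {ι : Type*} {E : ι → Type*} [∀ i, NormedAddCommGroup (E i)]
    {f : ∀ i, E i} (h : Summable fun i => ‖f i‖ ^ 2) : Memℓp f 2 :=
  memℓp_gen (by simpa using h)

namespace lp

variable {ι : Type*} {E : ι → Type*} [∀ i, NormedAddCommGroup (E i)]

theorem hasSum_norm_sq (f : lp E 2) : HasSum (fun i => ‖f i‖ ^ 2) (‖f‖ ^ 2) := by
  simpa using hasSum_norm (p := 2) (by norm_num) f

variable {κ 𝕜 : Type*} [NormedDivisionRing 𝕜]

theorem summable_norm_sq_mul (a : lp (fun _ : ι => 𝕜) 2) (b : lp (fun _ : κ => 𝕜) 2) :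
    Summable fun m : ι × κ => ‖a m.1‖ ^ 2 * ‖b m.2‖ ^ 2 :=
  (hasSum_norm_sq a).summable.mul_of_nonneg (hasSum_norm_sq b).summable
    (fun _ => by positivity) (fun _ => by positivity)

def tensorProd (a : lp (fun _ : ι => 𝕜) 2) (b : lp (fun _ : κ => 𝕜) 2) :
    lp (fun _ : ι × κ => 𝕜) 2 :=
  ⟨fun m => a m.1 * b m.2, memℓp_two_of_summable_sq <| by
    simpa only [norm_mul, mul_pow] using summable_norm_sq_mul a b⟩

@[simp]
theorem tensorProd_apply (a : lp (fun _ : ι => 𝕜) 2) (b : lp (fun _ : κ => 𝕜) 2) (m : ι × κ) :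
    tensorProd a b m = a m.1 * b m.2 := rfl

theorem norm_tensorProd (a : lp (fun _ : ι => 𝕜) 2) (b : lp (fun _ : κ => 𝕜) 2) :
    ‖tensorProd a b‖ = ‖a‖ * ‖b‖ := by
  have h := ((hasSum_norm_sq a).mul (hasSum_norm_sq b) (summable_norm_sq_mul a b)).unique
    (by simpa only [tensorProd_apply, norm_mul, mul_pow] using hasSum_norm_sq (tensorProd a b))
  rw [← mul_pow] at h
  exact (pow_left_inj₀ (norm_nonneg _) (by positivity) two_ne_zero).mp h.symm

end lp

def discreteLaplacian {R : Type*} [Ring R] (f : ℤ → R) (n : ℤ) : R :=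
  2 * f n - f (n + 1) - f (n - 1)

def boundState {R : Type*} [Monoid R] (r : R) (n : ℤ) : R :=
  r ^ n.natAbs

theorem discreteLaplacian_boundState {R : Type*} [CommRing R] {r t : R} (h : r ^ 2 + t * r = 1)
    (n : ℤ) :
    discreteLaplacian (boundState r) n - t * (if n = 0 then boundState r n else 0) =
      (2 - 2 * r - t) * boundState r n := by
  unfold discreteLaplacian boundState
  rcases eq_or_ne n 0 with rfl | hn
  · rw [if_pos rfl, Int.natAbs_zero, show (0 + 1 : ℤ).natAbs = 1 from rfl,
      show (0 - 1 : ℤ).natAbs = 1 from rfl]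
    ring
  obtain ⟨k, hk⟩ : ∃ k, n.natAbs = k + 1 := ⟨n.natAbs - 1, by omega⟩
  rw [if_neg hn, hk]
  rcases hn.lt_or_gt with hneg | hpos
  · rw [show (n + 1).natAbs = k by omega, show (n - 1).natAbs = k + 2 by omega]
    linear_combination r ^ k * h
  · rw [show (n + 1).natAbs = k + 2 by omega, show (n - 1).natAbs = k by omega]
    linear_combination r ^ k * h

theorem memℓp_boundState {𝕜 : Type*} [NormedDivisionRing 𝕜] {r : 𝕜} (hr : ‖r‖ < 1) :
    Memℓp (boundState r) 2 := by
  have h := summable_geometric_of_lt_one (by positivity) (pow_lt_one₀ (norm_nonneg r) hr two_ne_zero)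
  refine memℓp_two_of_summable_sq (.of_nat_of_neg ?_ ?_) <;>
  · refine h.congr fun n => ?_
    simp only [boundState, Int.natAbs_neg, Int.natAbs_natCast, norm_pow, ← pow_mul, mul_comm]

theorem exists_decay_rate {t : ℝ} (ht : 0 < t) :
    ∃ r : ℝ, |r| < 1 ∧ r ^ 2 + t * r = 1 ∧ 2 - 2 * r - t = 2 - √(4 + t ^ 2) := by
  have hs := Real.sq_sqrt (show 0 ≤ 4 + t ^ 2 by positivity)
  have hst : t < √(4 + t ^ 2) := by nlinarith [Real.sqrt_nonneg (4 + t ^ 2)]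
  refine ⟨(√(4 + t ^ 2) - t) / 2, abs_lt.mpr ⟨by linarith, by nlinarith⟩, by nlinarith, by ring⟩

theorem exists_norm_eq_one_two_sub_add_inv {ν : ℝ} (h0 : 0 ≤ ν) (h4 : ν ≤ 4) :
    ∃ z : ℂ, ‖z‖ = 1 ∧ 2 - (z + z⁻¹) = ν := by
  set θ := Real.arccos (1 - ν / 2)
  have hcos : Real.cos θ = 1 - ν / 2 := Real.cos_arccos (by linarith) (by linarith)
  refine ⟨Complex.exp (θ * Complex.I), Complex.norm_exp_ofReal_mul_I θ, ?_⟩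
  rw [← Complex.exp_neg, ← neg_mul, ← Complex.two_cos, ← Complex.ofReal_cos, hcos]
  push_cast
  ring

section TruncatedWave

variable {z : ℂ} {N : ℕ} {n : ℤ}

noncomputable def truncatedWave (z : ℂ) (N : ℕ) (n : ℤ) : ℂ :=
  if n.natAbs ≤ N then z ^ n else 0

theorem norm_truncatedWave_le (hz : ‖z‖ = 1) : ‖truncatedWave z N n‖ ≤ 1 := by
  unfold truncatedWave
  split_ifs <;> simp [hz]

theorem hasSum_norm_sq_truncatedWave (hz : ‖z‖ = 1) :
    HasSum (fun n => ‖truncatedWave z N n‖ ^ 2) (2 * N + 1) := by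
  have h : HasSum (fun n => ‖truncatedWave z N n‖ ^ 2)
      (∑ n ∈ Finset.Icc (-(N : ℤ)) N, ‖truncatedWave z N n‖ ^ 2) :=
    hasSum_sum_of_ne_finset_zero fun n hn => by
      rw [Finset.mem_Icc, not_and_or, not_le, not_le] at hn
      simp [truncatedWave, show ¬ n.natAbs ≤ N by omega]
  convert h using 1
  rw [Finset.sum_congr rfl (g := fun _ => 1) fun n hn => by
      rw [Finset.mem_Icc] at hn
      simp [truncatedWave, show n.natAbs ≤ N by omega, hz]]
  rw [Finset.sum_const, Int.card_Icc, show (N + 1 - -N : ℤ).toNat = 2 * N + 1 by omega]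
  simp

theorem residual_truncatedWave_eq_zero {ν : ℂ} (hz : z ≠ 0) (hν : 2 - (z + z⁻¹) = ν)
    (hn : n ∉ ({-(N : ℤ) - 1, -(N : ℤ), (N : ℤ), (N : ℤ) + 1} : Finset ℤ)) :
    ν * truncatedWave z N n - discreteLaplacian (truncatedWave z N) n = 0 := by
  simp only [Finset.mem_insert, Finset.mem_singleton, not_or] at hn
  unfold discreteLaplacian truncatedWave
  rcases lt_or_ge n.natAbs N with hlt | hge
  · rw [if_pos hlt.le, if_pos (by omega), if_pos (by omega), zpow_add_one₀ hz, zpow_sub_one₀ hz,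
      ← hν]
    ring
  · rw [if_neg (by omega), if_neg (by omega), if_neg (by omega)]
    ring

theorem norm_residual_truncatedWave_le {ν : ℂ} (hz : ‖z‖ = 1) (hν : 2 - (z + z⁻¹) = ν) :
    ‖ν * truncatedWave z N n - discreteLaplacian (truncatedWave z N) n‖ ≤ 4 := by
  have hν2 : ‖ν - 2‖ ≤ 2 := by
    rw [← hν, show 2 - (z + z⁻¹) - 2 = -(z + z⁻¹) by ring, norm_neg]
    exact (norm_add_le _ _).trans (by simp [hz]; norm_num)
  have := norm_truncatedWave_le (N := N) (n := n) hz
  have := norm_truncatedWave_le (N := N) (n := n + 1) hz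
  have := norm_truncatedWave_le (N := N) (n := n - 1) hz
  calc _ = ‖(ν - 2) * truncatedWave z N n + truncatedWave z N (n + 1)
          + truncatedWave z N (n - 1)‖ := by unfold discreteLaplacian; ring_nf
    _ ≤ ‖ν - 2‖ * ‖truncatedWave z N n‖ + ‖truncatedWave z N (n + 1)‖
          + ‖truncatedWave z N (n - 1)‖ := by
        grw [norm_add_le, norm_add_le, norm_mul]
    _ ≤ 2 * 1 + 1 + 1 := by gcongr
    _ = 4 := by norm_num

theorem hasSum_norm_sq_residual_truncatedWave {ν : ℂ} (hz : ‖z‖ = 1) (hν : 2 - (z + z⁻¹) = ν) :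
    ∃ s ≤ 64, HasSum
      (fun n => ‖ν * truncatedWave z N n - discreteLaplacian (truncatedWave z N) n‖ ^ 2) s := by
  have hz0 : z ≠ 0 := norm_ne_zero_iff.mp (by rw [hz]; exact one_ne_zero)
  set S : Finset ℤ := {-(N : ℤ) - 1, -(N : ℤ), (N : ℤ), (N : ℤ) + 1}
  refine ⟨_, ?_, hasSum_sum_of_ne_finset_zero (s := S) fun n hn => by
    rw [residual_truncatedWave_eq_zero hz0 hν hn, norm_zero, zero_pow two_ne_zero]⟩
  calc _ ≤ S.card • (4 ^ 2 : ℝ) := Finset.sum_le_card_nsmul _ _ _ fun n _ =>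
          pow_le_pow_left₀ (norm_nonneg _) (norm_residual_truncatedWave_le hz hν) 2
    _ ≤ 4 • (4 ^ 2 : ℝ) := nsmul_le_nsmul_left (by positivity) Finset.card_le_four
    _ = 64 := by norm_num

end TruncatedWave

theorem exists_lp_residual_discreteLaplacian_lt {ν : ℝ} (h0 : 0 ≤ ν) (h4 : ν ≤ 4) {ε : ℝ}
    (hε : 0 < ε) :
    ∃ a d : lp (fun _ : ℤ => ℂ) 2,
      (∀ n, d n = ν * a n - discreteLaplacian a n) ∧ ‖d‖ < ε * ‖a‖ := by
  obtain ⟨z, hz, hν⟩ := exists_norm_eq_one_two_sub_add_inv h0 h4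
  obtain ⟨N, hN⟩ := exists_nat_gt (64 / ε ^ 2)
  have ha := hasSum_norm_sq_truncatedWave (N := N) hz
  set a : lp (fun _ : ℤ => ℂ) 2 := ⟨truncatedWave z N, memℓp_two_of_summable_sq ha.summable⟩
  obtain ⟨s, hs, hd⟩ := hasSum_norm_sq_residual_truncatedWave (N := N) hz hν
  set d : lp (fun _ : ℤ => ℂ) 2 := ⟨_, memℓp_two_of_summable_sq hd.summable⟩
  refine ⟨a, d, fun n => rfl, lt_of_pow_lt_pow_left₀ 2 (by positivity) ?_⟩
  rw [(lp.hasSum_norm_sq d).unique hd, mul_pow, (lp.hasSum_norm_sq a).unique ha]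
  rw [div_lt_iff₀ (by positivity)] at hN
  nlinarith

/-- For the single-strip guided potential of depth `t` on the square lattice, the whole
guided band `[2 - √(4 + t²), 6 - √(4 + t²)]` lies in the real spectrum of `H_t`. -/
theorem single_strip_guided_band
    (t : ℝ) (ht : 0 < t)
    (H : lp (fun _ : ℤ × ℤ => ℂ) 2 →L[ℂ] lp (fun _ : ℤ × ℤ => ℂ) 2)
    (hH : ∀ (f : lp (fun _ : ℤ × ℤ => ℂ) 2) (m₁ m₂ : ℤ),
      H f (m₁, m₂) = 4 * f (m₁, m₂) - f (m₁ + 1, m₂) - f (m₁ - 1, m₂)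
        - f (m₁, m₂ + 1) - f (m₁, m₂ - 1)
        - (t : ℂ) * (if m₂ = 0 then f (m₁, m₂) else 0)) :
    ∀ x ∈ Set.Icc (2 - Real.sqrt (4 + t ^ 2)) (6 - Real.sqrt (4 + t ^ 2)),
      (x : ℂ) ∈ spectrum ℂ H := by
  intro x hx
  obtain ⟨r, hr, hrt, hμ⟩ := exists_decay_rate ht
  set ν := x - (2 - 2 * r - t)
  obtain ⟨hν0, hν4⟩ : 0 ≤ ν ∧ ν ≤ 4 := by
    simp only [ν, hμ]; constructor <;> linarith [hx.1, hx.2]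
  let b : lp (fun _ : ℤ => ℂ) 2 := ⟨boundState (r : ℂ), memℓp_boundState (by simpa using hr)⟩
  have hb : 0 < ‖b‖ := one_pos.trans_le <| by
    simpa [b, boundState] using lp.norm_apply_le_norm two_ne_zero b 0
  refine mem_spectrum_of_forall_exists_norm_lt H x fun ε hε => ?_
  obtain ⟨a, d, hd, hlt⟩ := exists_lp_residual_discreteLaplacian_lt hν0 hν4 hε
  refine ⟨lp.tensorProd a b, ?_⟩
  have hF : (algebraMap ℂ _ (x : ℂ) - H) (lp.tensorProd a b) = lp.tensorProd d b := by
    ext ⟨m₁, m₂⟩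
    have key := discreteLaplacian_boundState (r := (r : ℂ)) (t := (t : ℂ)) (by exact_mod_cast hrt) m₂
    simp only [discreteLaplacian] at key
    rw [sub_apply, lp.coeFn_sub, Pi.sub_apply, Algebra.algebraMap_eq_smul_one, smul_apply,
      one_apply_eq_self, lp.coeFn_smul, Pi.smul_apply, smul_eq_mul]
    simp only [lp.tensorProd_apply, hH, mul_ite, mul_zero, hd, discreteLaplacian, b, ν,
      Complex.ofReal_sub, Complex.ofReal_ofNat, Complex.ofReal_mul]
    split_ifs at key ⊢ <;> linear_combination (-a m₁) * key
  rw [hF, lp.norm_tensorProd, lp.norm_tensorProd, ← mul_assoc]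
  exact mul_lt_mul_of_pos_right hlt hb
end
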